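/- Let 𝒜 be an invertible 4 × 4 complex matrix with rows 𝔞₀, 𝔞₁, 𝔞₂, 𝔞₃ ∈ ℂ⁴ (rows indexed by the basis order |00⟩,|01⟩,|10⟩,|11⟩), and let 𝒱 ⊆ ℂ² ⊗ ℂ² ⊗ ℂ² be the orthogonal complement of the span of the vectors (1,α) ⊗ 𝒜(1,α,α²,α³) over all α ∈ ℂ. For (β₀,β₁) ∈ ℂ², let 𝒳_{B|AC}(β₀,β₁) be the 5 × 4 matrix whose four columns are: (β₀𝔞₀ + β₁𝔞₂) with a 0 appended as fifth entry; (β₀𝔞₁ + β₁𝔞₃) with a 0 appended; (β₀𝔞₀ + β₁𝔞₂) with a 0 prepended as first entry; and (β₀𝔞₁ + β₁𝔞₃) with a 0 prepended. Likewise let 𝒳_{C|AB}(γ₀,γ₁) be the 5 × 4 matrix built the same way from the vectors γ₀𝔞₀ + γ₁𝔞₁ and γ₀𝔞₂ + γ₁𝔞₃. Then 𝒱 is a genuinely entangled subspace of ℂ² ⊗ ℂ² ⊗ ℂ² if and only if 𝒳_{B|AC}(β₀,β₁) has rank 4 for every nonzero (β₀,β₁) ∈ ℂ² and 𝒳_{C|AB}(γ₀,γ₁)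 has rank 4 for every nonzero (γ₀,γ₁) ∈ ℂ². -/

import Mathlib

/-!
For fixed `ψ`, `α ↦ ⟪ψ, (1,α) ⊗ 𝒜(1,α,α²,α³)⟫` is a polynomial of degree at most four, so `ψ ∈ 𝒱`
iff its five coefficients vanish. For a product `a ⊗ g` across `A|BC` this polynomial factors as
`⟪a, (1,α)⟫ · ⟪𝒜ᴴg, (1,α,α²,α³)⟫`; polynomials have no zero divisors and `𝒜ᴴ` is injective, so
`𝒱` contains no such product. For a product `b ⊗ g` across `B|AC` the five coefficients are the
entries of `𝒳_{B|AC}(b̄) ḡ`, so `𝒱` contains one iff some `𝒳_{B|AC}(β)` with `β ≠ 0` has a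
nontrivial kernel, i.e. rank below four. Exchanging the parties `B` and `C` exchanges the rows
`𝔞₁, 𝔞₂` of `𝒜` and turns `𝒳_{C|AB}` into `𝒳_{B|AC}`.
-/noncomputable section

abbrev TriH (d₁ d₂ d₃ : ℕ) := EuclideanSpace ℂ (Fin d₁ × Fin d₂ × Fin d₃)

def BiprodA {d₁ d₂ d₃ : ℕ} (ψ : TriH d₁ d₂ d₃) : Prop :=
  ∃ (a : Fin d₁ → ℂ) (g : Fin d₂ × Fin d₃ → ℂ), ∀ i j k, ψ (i, j, k) = a i * g (j, k)

def BiprodB {d₁ d₂ d₃ : ℕ} (ψ : TriH d₁ d₂ d₃) : Prop :=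
  ∃ (b : Fin d₂ → ℂ) (g : Fin d₁ × Fin d₃ → ℂ), ∀ i j k, ψ (i, j, k) = b j * g (i, k)

def BiprodC {d₁ d₂ d₃ : ℕ} (ψ : TriH d₁ d₂ d₃) : Prop :=
  ∃ (c : Fin d₃ → ℂ) (g : Fin d₁ × Fin d₂ → ℂ), ∀ i j k, ψ (i, j, k) = c k * g (i, j)

def IsGME3 {d₁ d₂ d₃ : ℕ} (ψ : TriH d₁ d₂ d₃) : Prop :=
  ψ ≠ 0 ∧ ¬ BiprodA ψ ∧ ¬ BiprodB ψ ∧ ¬ BiprodC ψ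

def IsGES3 {d₁ d₂ d₃ : ℕ} (V : Submodule ℂ (TriH d₁ d₂ d₃)) : Prop :=
  ∀ ψ ∈ V, ψ ≠ 0 → IsGME3 ψ

/-- The identification `ℂ² ⊗ ℂ² ≅ ℂ⁴` via binary expansion: `(j,k) ↦ 2j + k`. -/
def idx4 (j k : Fin 2) : Fin 4 := ⟨2 * j.1 + k.1, by have := j.2; have := k.2; omega⟩

/-- The family `(1,α) ⊗ 𝒜(1,α,α²,α³)` spanning `𝒱^⊥`. -/
def curveA (A : Matrix (Fin 4) (Fin 4) ℂ) (α : ℂ) : TriH 2 2 2 :=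
  WithLp.toLp 2 (fun p : Fin 2 × Fin 2 × Fin 2 =>
    ![(1 : ℂ), α] p.1 * A.mulVec ![1, α, α ^ 2, α ^ 3] (idx4 p.2.1 p.2.2))

/-- The `5 × 4` matrix `𝒳_{B|AC}(β₀,β₁)` built from the rows `𝔞₀,…,𝔞₃` of `𝒜`:
its columns are `β₀𝔞₀+β₁𝔞₂` and `β₀𝔞₁+β₁𝔞₃` with a `0` appended, and the same two
vectors with a `0` prepended. -/
def XBAC (A : Matrix (Fin 4) (Fin 4) ℂ) (β₀ β₁ : ℂ) : Matrix (Fin 5) (Fin 4) ℂ :=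
  let u : Fin 4 → ℂ := fun t => β₀ * A 0 t + β₁ * A 2 t
  let v : Fin 4 → ℂ := fun t => β₀ * A 1 t + β₁ * A 3 t
  !![u 0, v 0, 0, 0;
     u 1, v 1, u 0, v 0;
     u 2, v 2, u 1, v 1;
     u 3, v 3, u 2, v 2;
     0, 0, u 3, v 3]

/-- The `5 × 4` matrix `𝒳_{C|AB}(γ₀,γ₁)`, built likewise from `γ₀𝔞₀+γ₁𝔞₁` and
`γ₀𝔞₂+γ₁𝔞₃`. -/
def XCAB (A : Matrix (Fin 4) (Fin 4) ℂ) (γ₀ γ₁ : ℂ) : Matrix (Fin 5) (Fin 4) ℂ :=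
  let u : Fin 4 → ℂ := fun t => γ₀ * A 0 t + γ₁ * A 1 t
  let v : Fin 4 → ℂ := fun t => γ₀ * A 2 t + γ₁ * A 3 t
  !![u 0, v 0, 0, 0;
     u 1, v 1, u 0, v 0;
     u 2, v 2, u 1, v 1;
     u 3, v 3, u 2, v 2;
     0, 0, u 3, v 3]

open Matrix
open scoped InnerProductSpace

theorem Matrix.rank_eq_card_iff_forall_mulVec_eq_zero {K m n : Type*} [Field K] [Fintype m]
    [Fintype n] (M : Matrix m n K) : M.rank = Fintype.card n ↔ ∀ v, M *ᵥ v = 0 → v = 0 := by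
  rw [rank_eq_finrank_span_cols, eq_comm, ← Set.finrank,
    ← linearIndependent_iff_card_eq_finrank_span, ← mulVec_injective_iff, ← coe_mulVecLin,
    injective_iff_map_eq_zero]

theorem fin_two_fun_ne_zero_iff {R : Type*} [Zero R] {b : Fin 2 → R} :
    b ≠ 0 ↔ ¬(b 0 = 0 ∧ b 1 = 0) := by
  simp [funext_iff, Fin.forall_fin_two]

theorem Submodule.mem_orthogonal_span_range_iff {𝕜 E ι : Type*} [RCLike 𝕜]
    [NormedAddCommGroup E] [InnerProductSpace 𝕜 E] (f : ι → E) (v : E) :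
    v ∈ (span 𝕜 (Set.range f))ᗮ ↔ ∀ i, ⟪v, f i⟫_𝕜 = 0 := by
  simp [← span_singleton_le_iff_mem, ← isOrtho_iff_le, isOrtho_span]

namespace Polynomial

variable {R : Type*}

theorem eval_ofFn [CommSemiring R] [DecidableEq R] {n : ℕ} (v : Fin n → R) (x : R) :
    (ofFn n v).eval x = ∑ i, v i * x ^ (i : ℕ) := by
  simp [ofFn_eq_sum_monomial, eval_finsetSum]

theorem ofFn_eq_zero_iff [Semiring R] [DecidableEq R] {n : ℕ} {v : Fin n → R} :
    ofFn n v = 0 ↔ v = 0 :=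
  (injective_ofFn n).eq_iff' (map_zero _)

end Polynomial

section PolynomialFunctions

open Polynomial

variable {R : Type*} [CommRing R] [IsDomain R] [Infinite R]

theorem eq_zero_of_forall_sum_mul_pow_eq_zero {n : ℕ} {v : Fin n → R}
    (h : ∀ x, ∑ i, v i * x ^ (i : ℕ) = 0) : v = 0 := by
  classical
  rw [← ofFn_eq_zero_iff]
  exact Polynomial.funext (by simpa [eval_ofFn] using h)

theorem eq_zero_of_forall_sum_mul_pow_mul_eq_zero {m n : ℕ} {u : Fin m → R} {v : Fin n → R}
    (hu : u ≠ 0) (h : ∀ x, (∑ i, u i * x ^ (i : ℕ)) * ∑ j, v j * x ^ (j : ℕ) = 0) : v = 0 := by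
  classical
  have huv : ofFn m u * ofFn n v = 0 := Polynomial.funext (by simpa [eval_ofFn] using h)
  rw [← ofFn_eq_zero_iff]
  exact (mul_eq_zero.mp huv).resolve_left (ofFn_eq_zero_iff.not.mpr hu)

end PolynomialFunctions

@[simp] theorem idx4_zero_zero : idx4 0 0 = 0 := rfl

@[simp] theorem idx4_zero_one : idx4 0 1 = 1 := rfl

@[simp] theorem idx4_one_zero : idx4 1 0 = 2 := rfl

@[simp] theorem idx4_one_one : idx4 1 1 = 3 := rfl

def idx4Equiv : Fin 2 × Fin 2 ≃ Fin 4 where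
  toFun p := idx4 p.1 p.2
  invFun := ![(0, 0), (0, 1), (1, 0), (1, 1)]
  left_inv := by decide
  right_inv := by decide

@[simp] theorem idx4Equiv_apply (j k : Fin 2) : idx4Equiv (j, k) = idx4 j k := rfl

def curveOrthogonal (A : Matrix (Fin 4) (Fin 4) ℂ) : Submodule ℂ (TriH 2 2 2) :=
  (Submodule.span ℂ (Set.range (curveA A)))ᗮ

theorem mem_curveOrthogonal_iff {A : Matrix (Fin 4) (Fin 4) ℂ} {ψ : TriH 2 2 2} :
    ψ ∈ curveOrthogonal A ↔ ∀ α, ⟪ψ, curveA A α⟫_ℂ = 0 :=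
  Submodule.mem_orthogonal_span_range_iff _ _

def tensorA (a : Fin 2 → ℂ) (w : Fin 4 → ℂ) : TriH 2 2 2 :=
  WithLp.toLp 2 fun p => a p.1 * w (idx4 p.2.1 p.2.2)

def tensorB (b : Fin 2 → ℂ) (w : Fin 4 → ℂ) : TriH 2 2 2 :=
  WithLp.toLp 2 fun p => b p.2.1 * w (idx4 p.1 p.2.2)

theorem biprodA_iff {ψ : TriH 2 2 2} : BiprodA ψ ↔ ∃ a w, ψ = tensorA a w := by
  constructor
  · rintro ⟨a, g, hg⟩
    exact ⟨a, g ∘ idx4Equiv.symm, by ext ⟨i, j, k⟩; simp [tensorA, hg, ← idx4Equiv_apply]⟩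
  · rintro ⟨a, w, rfl⟩
    exact ⟨a, fun q => w (idx4 q.1 q.2), fun _ _ _ => rfl⟩

theorem biprodB_iff {ψ : TriH 2 2 2} : BiprodB ψ ↔ ∃ b w, ψ = tensorB b w := by
  constructor
  · rintro ⟨b, g, hg⟩
    exact ⟨b, g ∘ idx4Equiv.symm, by ext ⟨i, j, k⟩; simp [tensorB, hg, ← idx4Equiv_apply]⟩
  · rintro ⟨b, w, rfl⟩
    exact ⟨b, fun q => w (idx4 q.1 q.2), fun _ _ _ => rfl⟩

theorem tensorA_eq_zero_iff {a : Fin 2 → ℂ} {w : Fin 4 → ℂ} :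
    tensorA a w = 0 ↔ a = 0 ∨ w = 0 := by
  constructor
  · contrapose!
    rintro ⟨ha, hw⟩ h
    obtain ⟨i, hi⟩ := Function.ne_iff.1 ha
    obtain ⟨t, ht⟩ := Function.ne_iff.1 hw
    obtain ⟨⟨j, k⟩, rfl⟩ := idx4Equiv.surjective t
    exact mul_ne_zero hi ht congr($h (i, j, k))
  · rintro (rfl | rfl) <;> ext <;> simp [tensorA]

theorem tensorB_eq_zero_iff {b : Fin 2 → ℂ} {w : Fin 4 → ℂ} :
    tensorB b w = 0 ↔ b = 0 ∨ w = 0 := by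
  constructor
  · contrapose!
    rintro ⟨hb, hw⟩ h
    obtain ⟨j, hj⟩ := Function.ne_iff.1 hb
    obtain ⟨t, ht⟩ := Function.ne_iff.1 hw
    obtain ⟨⟨i, k⟩, rfl⟩ := idx4Equiv.surjective t
    exact mul_ne_zero hj ht congr($h (i, j, k))
  · rintro (rfl | rfl) <;> ext <;> simp [tensorB]

theorem inner_tensorA_curveA (A : Matrix (Fin 4) (Fin 4) ℂ) (a : Fin 2 → ℂ) (w : Fin 4 → ℂ)
    (α : ℂ) : ⟪tensorA a w, curveA A α⟫_ℂ =
      (∑ i, star a i * α ^ (i : ℕ)) * ∑ s, (star w ᵥ* A) s * α ^ (s : ℕ) := by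
  simp only [tensorA, curveA, PiLp.inner_apply, RCLike.inner_apply, Fintype.sum_prod_type,
    Fin.sum_univ_two, Fin.sum_univ_four, mulVec, vecMul, dotProduct, Pi.star_apply,
    RCLike.star_def, map_mul, cons_val_zero, cons_val_one, cons_val, cons_val_fin_one,
    idx4_zero_zero, idx4_zero_one, idx4_one_zero, idx4_one_one, Fin.coe_ofNat_eq_mod, Nat.reduceMod]
  ring

theorem inner_tensorB_curveA (A : Matrix (Fin 4) (Fin 4) ℂ) (b : Fin 2 → ℂ) (w : Fin 4 → ℂ)
    (α : ℂ) : ⟪tensorB b w, curveA A α⟫_ℂ =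
      ∑ m : Fin 5, (XBAC A (star b 0) (star b 1) *ᵥ star w) m * α ^ (m : ℕ) := by
  simp only [tensorB, curveA, XBAC, PiLp.inner_apply, RCLike.inner_apply, Fintype.sum_prod_type,
    Fin.sum_univ_two, Fin.sum_univ_four, Fin.sum_univ_five, mulVec, dotProduct, Pi.star_apply,
    RCLike.star_def, map_mul, of_apply, cons_val', cons_val_zero, cons_val_one, cons_val,
    cons_val_fin_one, idx4_zero_zero, idx4_zero_one, idx4_one_zero, idx4_one_one,
    Fin.coe_ofNat_eq_mod, Nat.reduceMod]
  ring

theorem not_biprodA_of_mem_curveOrthogonal {A : Matrix (Fin 4) (Fin 4) ℂ} (hA : IsUnit A.det)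
    {ψ : TriH 2 2 2} (hψ : ψ ∈ curveOrthogonal A) (hne : ψ ≠ 0) : ¬BiprodA ψ := by
  rw [biprodA_iff]
  rintro ⟨a, w, rfl⟩
  obtain ⟨ha, hw⟩ := not_or.1 (tensorA_eq_zero_iff.not.1 hne)
  have hwA : star w ᵥ* A = 0 :=
    eq_zero_of_forall_sum_mul_pow_mul_eq_zero (star_ne_zero.2 ha) fun α => by
      rw [← inner_tensorA_curveA]
      exact mem_curveOrthogonal_iff.1 hψ α
  have hw' : star w = 0 :=
    vecMul_injective_of_isUnit ((isUnit_iff_isUnit_det A).2 hA) (hwA.trans (zero_vecMul A).symm)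
  exact hw (star_eq_zero.1 hw')

theorem tensorB_mem_curveOrthogonal_iff {A : Matrix (Fin 4) (Fin 4) ℂ} {b : Fin 2 → ℂ}
    {w : Fin 4 → ℂ} :
    tensorB b w ∈ curveOrthogonal A ↔ XBAC A (star b 0) (star b 1) *ᵥ star w = 0 := by
  simp_rw [mem_curveOrthogonal_iff, inner_tensorB_curveA]
  exact ⟨eq_zero_of_forall_sum_mul_pow_eq_zero,
    fun h α => by simp only [h, Pi.zero_apply, zero_mul, Finset.sum_const_zero]⟩

theorem forall_mem_curveOrthogonal_not_biprodB_iff (A : Matrix (Fin 4) (Fin 4) ℂ) :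
    (∀ ψ ∈ curveOrthogonal A, ψ ≠ 0 → ¬BiprodB ψ) ↔
      ∀ β₀ β₁ : ℂ, ¬(β₀ = 0 ∧ β₁ = 0) → (XBAC A β₀ β₁).rank = 4 := by
  have hrank (M : Matrix (Fin 5) (Fin 4) ℂ) : M.rank = 4 ↔ ∀ v, M *ᵥ v = 0 → v = 0 :=
    M.rank_eq_card_iff_forall_mulVec_eq_zero
  simp_rw [hrank, biprodB_iff]
  constructor
  · intro h β₀ β₁ hβ w hw
    by_contra hw0
    have hb : star ![β₀, β₁] ≠ 0 := star_ne_zero.2 (fin_two_fun_ne_zero_iff.2 hβ)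
    refine h (tensorB (star ![β₀, β₁]) (star w)) (tensorB_mem_curveOrthogonal_iff.2 ?_)
      (by simp [tensorB_eq_zero_iff, hb, hw0]) ⟨_, _, rfl⟩
    simpa using hw
  · rintro h ψ hψ hne ⟨b, w, rfl⟩
    obtain ⟨hb, hw⟩ := not_or.1 (tensorB_eq_zero_iff.not.1 hne)
    have hβ : ¬(star b 0 = 0 ∧ star b 1 = 0) := fin_two_fun_ne_zero_iff.1 (star_ne_zero.2 hb)
    exact hw (star_eq_zero.1 (h _ _ hβ _ (tensorB_mem_curveOrthogonal_iff.1 hψ)))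

def swapBC : TriH 2 2 2 ≃ₗᵢ[ℂ] TriH 2 2 2 :=
  LinearIsometryEquiv.piLpCongrLeft 2 ℂ ℂ
    ((Equiv.refl (Fin 2)).prodCongr (Equiv.prodComm (Fin 2) (Fin 2)))

@[simp] theorem swapBC_apply (ψ : TriH 2 2 2) (i j k : Fin 2) :
    swapBC ψ (i, j, k) = ψ (i, k, j) :=
  rfl

theorem biprodB_swapBC_iff {ψ : TriH 2 2 2} : BiprodB (swapBC ψ) ↔ BiprodC ψ := by
  simp only [BiprodB, BiprodC, swapBC_apply]
  exact ⟨fun ⟨c, g, h⟩ => ⟨c, g, fun i j k => h i k j⟩,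
    fun ⟨c, g, h⟩ => ⟨c, g, fun i j k => h i k j⟩⟩

theorem swap_one_two_idx4 (j k : Fin 2) : Equiv.swap (1 : Fin 4) 2 (idx4 j k) = idx4 k j := by
  fin_cases j <;> fin_cases k <;> decide

theorem curveA_submatrix_swap (A : Matrix (Fin 4) (Fin 4) ℂ) (α : ℂ) :
    curveA (A.submatrix (Equiv.swap 1 2) id) α = swapBC (curveA A α) := by
  ext ⟨i, j, k⟩
  simp [curveA, mulVec, dotProduct, swap_one_two_idx4]

theorem XCAB_eq_XBAC_submatrix_swap (A : Matrix (Fin 4) (Fin 4) ℂ) (γ₀ γ₁ : ℂ) :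
    XCAB A γ₀ γ₁ = XBAC (A.submatrix (Equiv.swap 1 2) id) γ₀ γ₁ := by
  ext i j
  fin_cases i <;> fin_cases j <;> rfl

theorem swapBC_mem_curveOrthogonal_iff {A : Matrix (Fin 4) (Fin 4) ℂ} {ψ : TriH 2 2 2} :
    swapBC ψ ∈ curveOrthogonal (A.submatrix (Equiv.swap 1 2) id) ↔ ψ ∈ curveOrthogonal A := by
  simp_rw [mem_curveOrthogonal_iff, curveA_submatrix_swap, LinearIsometryEquiv.inner_map_map]

theorem forall_mem_curveOrthogonal_not_biprodC_iff (A : Matrix (Fin 4) (Fin 4) ℂ) :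
    (∀ ψ ∈ curveOrthogonal A, ψ ≠ 0 → ¬BiprodC ψ) ↔
      ∀ γ₀ γ₁ : ℂ, ¬(γ₀ = 0 ∧ γ₁ = 0) → (XCAB A γ₀ γ₁).rank = 4 := by
  simp_rw [XCAB_eq_XBAC_submatrix_swap, ← forall_mem_curveOrthogonal_not_biprodB_iff]
  conv_rhs => rw [swapBC.surjective.forall]
  simp_rw [swapBC_mem_curveOrthogonal_iff, biprodB_swapBC_iff, ne_eq,
    LinearIsometryEquiv.map_eq_zero_iff]

/-- `𝒱 = (span{(1,α) ⊗ 𝒜(1,α,α²,α³)})^⊥` is a GES of `ℂ²⊗ℂ²⊗ℂ²` iff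
`𝒳_{B|AC}(β)` and `𝒳_{C|AB}(γ)` have rank 4 for all nonzero `β, γ ∈ ℂ²`. -/
theorem three_qubit_GES_iff_full_rank (A : Matrix (Fin 4) (Fin 4) ℂ)
    (hA : IsUnit A.det) :
    IsGES3 ((Submodule.span ℂ (Set.range (curveA A)))ᗮ) ↔
      (∀ β₀ β₁ : ℂ, ¬(β₀ = 0 ∧ β₁ = 0) → (XBAC A β₀ β₁).rank = 4) ∧
      (∀ γ₀ γ₁ : ℂ, ¬(γ₀ = 0 ∧ γ₁ = 0) → (XCAB A γ₀ γ₁).rank = 4) := by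
  rw [← forall_mem_curveOrthogonal_not_biprodB_iff, ← forall_mem_curveOrthogonal_not_biprodC_iff]
  refine ⟨fun h => ⟨fun ψ hψ hne => (h ψ hψ hne).2.2.1, fun ψ hψ hne => (h ψ hψ hne).2.2.2⟩, ?_⟩
  rintro ⟨hB, hC⟩ ψ hψ hne
  exact ⟨hne, not_biprodA_of_mem_curveOrthogonal hA hψ hne, hB ψ hψ hne, hC ψ hψ hne⟩
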